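/- arXiv:2507.12450 — 2 statements merged into one kernel-verified Lean document; each statement's English description precedes it below -/
import Mathlib

section
/- A linear order < on the vertex set of a finite simple graph G is a traversal (i.e., the connected components of G occupy disjoint intervals of <, and within each such interval every vertex except the <-least has a <-earlier neighbor) if and only if < satisfies: for all vertices a, b, c, if a < b < c and a is adjacent to c, then there exists d with d < b and d adjacent to b. -/
/-- A linear order on the vertices of a finite simple graph is a traversal (connected components
occupy intervals, and in each component every vertex except the least has an earlier neighbor)
if and only if whenever `a < b < c` and `a` is adjacent to `c`, some `d < b` is adjacent to `b`. -/
theorem traversal_iff_firstOrder_condition {V : Type*} [Fintype V] [LinearOrder V]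
    (G : SimpleGraph V) :
    ((∀ a b c : V, a < b → b < c → G.Reachable a c → G.Reachable a b) ∧
      (∀ b : V, (∃ a : V, a < b ∧ G.Reachable a b) → ∃ d : V, d < b ∧ G.Adj d b)) ↔
    (∀ a b c : V, a < b → b < c → G.Adj a c → ∃ d : V, d < b ∧ G.Adj d b) := by
  constructor
  · rintro ⟨h1, h2⟩ a b c hab hbc hac
    exact h2 b ⟨a, hab, h1 a b c hab hbc hac.reachable⟩
  · intro C
    have cross : ∀ (a c : V) (_ : G.Walk a c) (b : V), a < b → b ≤ c →
        ∃ u v, G.Adj u v ∧ u < b ∧ b ≤ v ∧ G.Reachable a v := by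
      intro a c w
      induction w with
      | nil => intro b h1 h2; exact absurd (h1.trans_le h2) (lt_irrefl _)
      | @cons x y z h p ih =>
        intro b h1 h2
        by_cases hb : b ≤ y
        · exact ⟨x, y, h, h1, hb, h.reachable⟩
        · push_neg at hb
          obtain ⟨u, v, huv, hu, hv, hr⟩ := ih b hb h2
          exact ⟨u, v, huv, hu, hv, h.reachable.trans hr⟩
    have step : ∀ a b : V, a < b → G.Reachable a b → ∃ d, d < b ∧ G.Adj d b := by
      intro a b hab hr
      obtain ⟨w⟩ := hr
      obtain ⟨u, v, huv, hu, hv, _⟩ := cross a b w b hab le_rfl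
      rcases eq_or_lt_of_le hv with h | h
      · exact ⟨u, hu, h ▸ huv⟩
      · exact C u b v hu h huv
    have Q : ∀ b a c : V, a < b → b < c → G.Reachable a c → G.Reachable a b := by
      intro b
      induction b using WellFoundedLT.induction with
      | _ b IH =>
        intro a c hab hbc hr
        obtain ⟨w⟩ := hr
        obtain ⟨u, v, huv, hu, hv, hrav⟩ := cross a c w b hab hbc.le
        rcases eq_or_lt_of_le hv with h | h
        · exact h ▸ hrav
        · obtain ⟨d, hd, hdb⟩ := C u b v hu h huv
          rcases lt_trichotomy d a with hda | hda | hda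
          · exact (IH a hab d b hda hab hdb.reachable).symm.trans hdb.reachable
          · exact hda ▸ hdb.reachable
          · exact (IH d hd a c hda (hd.trans hbc) ⟨w⟩).trans hdb.reachable
    exact ⟨fun a b c hab hbc => Q b a c hab hbc, fun b ⟨a, hab, hr⟩ => step a b hab hr⟩
end

section
/- Let G and H be the simple graphs consisting, respectively, of a single countably infinite clique, and of the disjoint union of two countably infinite cliques. Then G ≈ H (G and H are Hanf equivalent: for every r ∈ ℕ, every isomorphism type of pointed r-neighborhood is realized the same number of times in G and H up to countable threshold), yet G and H are distinguished by a first-order sentence (e.g., 'any two vertices are adjacent or equal'). Hence elementary boolean queries are not Hanf local on arbitrary (non-locally-finite) structures. -/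
open FirstOrder

/-- The closed ball of radius `r` around `a` in a simple graph. -/
def gBall {V : Type} (G : SimpleGraph V) (a : V) (r : ℕ) : Set V :=
  {c : V | G.Reachable a c ∧ G.dist a c ≤ r}

/-- A pointed isomorphism between the induced subgraphs on `S` and `T` sending `a` to `b`. -/
def gPointedIso {V W : Type} (G : SimpleGraph V) (H : SimpleGraph W)
    (S : Set V) (T : Set W) (a : V) (b : W) : Prop :=
  ∃ (ha : a ∈ S) (hb : b ∈ T) (e : S ≃ T), e ⟨a, ha⟩ = ⟨b, hb⟩ ∧
    ∀ x y : S, G.Adj x y ↔ H.Adj (e x) (e y)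

/-- The pointed `r`-neighborhoods of `a` in `G` and `b` in `H` are isomorphic. -/
def gNbhdIso {V W : Type} (G : SimpleGraph V) (H : SimpleGraph W) (r : ℕ) (a : V) (b : W) :
    Prop :=
  gPointedIso G H (gBall G a r) (gBall H b r) a b

/-- Equipollence up to the countable threshold. -/
def gSameUpToOmega {V W : Type} (X : Set V) (Y : Set W) : Prop :=
  Cardinal.mk X = Cardinal.mk Y ∨ (X.Infinite ∧ Y.Infinite)

/-- Hanf equivalence of graphs: for every radius, each pointed neighborhood type is realized
the same number of times up to the countable threshold. -/
def gHanfEquiv {V W : Type} (G : SimpleGraph V) (H : SimpleGraph W) : Prop :=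
  ∀ r : ℕ,
    (∀ a : V, gSameUpToOmega {a' : V | gNbhdIso G G r a' a} {b : W | gNbhdIso H G r b a}) ∧
    (∀ b : W, gSameUpToOmega {a : V | gNbhdIso G H r a b} {b' : W | gNbhdIso H H r b' b})

/-- The disjoint union of two countably infinite cliques. -/
def twoCliques : SimpleGraph (ℕ ⊕ ℕ) where
  Adj x y := x ≠ y ∧ x.isLeft = y.isLeft
  symm := ⟨by rintro x y ⟨h, h'⟩; exact ⟨h.symm, h'.symm⟩⟩
  loopless := ⟨by rintro x ⟨h, -⟩; exact h rfl⟩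

-- key lemma
lemma key {V W : Type} (G : SimpleGraph V) (H : SimpleGraph W) (S : Set V) (T : Set W)
    (a : V) (b : W) (ha : a ∈ S) (hb : b ∈ T) (hcard : Cardinal.mk S = Cardinal.mk T)
    (hG : ∀ x y : S, G.Adj x y ↔ x ≠ y) (hH : ∀ x y : T, H.Adj x y ↔ x ≠ y) :
    gPointedIso G H S T a b := by
  classical
  obtain ⟨e⟩ := Cardinal.eq.mp hcard
  refine ⟨ha, hb, e.trans (Equiv.swap (e ⟨a, ha⟩) ⟨b, hb⟩), by simp, fun x y => ?_⟩
  rw [hG, hH]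
  simp [ne_eq, EmbeddingLike.apply_eq_iff_eq]

-- balls
lemma ball_top_zero (a : ℕ) : gBall (⊤ : SimpleGraph ℕ) a 0 = {a} := by
  ext c
  simp only [gBall, Set.mem_setOf_eq, Nat.le_zero, Set.mem_singleton_iff]
  constructor
  · rintro ⟨hr, hd⟩; exact (hr.dist_eq_zero_iff.mp hd).symm
  · rintro rfl; exact ⟨SimpleGraph.Reachable.refl _, by rw [SimpleGraph.dist_self]⟩

lemma ball_two_zero (a : ℕ ⊕ ℕ) : gBall twoCliques a 0 = {a} := by
  ext c
  simp only [gBall, Set.mem_setOf_eq, Nat.le_zero, Set.mem_singleton_iff]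
  constructor
  · rintro ⟨hr, hd⟩; exact (hr.dist_eq_zero_iff.mp hd).symm
  · rintro rfl; exact ⟨SimpleGraph.Reachable.refl _, by rw [SimpleGraph.dist_self]⟩

lemma ball_top_pos (a : ℕ) (r : ℕ) (hr : 1 ≤ r) : gBall (⊤ : SimpleGraph ℕ) a r = Set.univ := by
  ext c
  simp only [gBall, Set.mem_setOf_eq, Set.mem_univ, iff_true]
  rcases eq_or_ne a c with rfl | h
  · exact ⟨SimpleGraph.Reachable.refl _, by rw [SimpleGraph.dist_self]; exact Nat.zero_le _⟩
  · have hadj : (⊤ : SimpleGraph ℕ).Adj a c := h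
    exact ⟨hadj.reachable, le_trans (le_of_eq (SimpleGraph.dist_eq_one_iff_adj.mpr hadj)) hr⟩

lemma two_reachable_isLeft {a c : ℕ ⊕ ℕ} (h : twoCliques.Reachable a c) :
    a.isLeft = c.isLeft := by
  obtain ⟨w⟩ := h
  induction w with
  | nil => rfl
  | cons h _ ih => exact h.2.trans ih

lemma ball_two_pos (a : ℕ ⊕ ℕ) (r : ℕ) (hr : 1 ≤ r) :
    gBall twoCliques a r = {c | c.isLeft = a.isLeft} := by
  ext c
  simp only [gBall, Set.mem_setOf_eq]
  constructor
  · rintro ⟨h, -⟩; exact (two_reachable_isLeft h).symm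
  · intro h
    rcases eq_or_ne a c with rfl | hne
    · exact ⟨SimpleGraph.Reachable.refl _, by rw [SimpleGraph.dist_self]; exact Nat.zero_le _⟩
    · have hadj : twoCliques.Adj a c := ⟨hne, h.symm⟩
      exact ⟨hadj.reachable, le_trans (le_of_eq (SimpleGraph.dist_eq_one_iff_adj.mpr hadj)) hr⟩

-- cardinalities
lemma mk_side (b : Bool) : Cardinal.mk {c : ℕ ⊕ ℕ | c.isLeft = b} = Cardinal.aleph0 := by
  have : Infinite {c : ℕ ⊕ ℕ | c.isLeft = b} := by
    cases b
    · exact Infinite.of_injective (fun n => ⟨Sum.inr n, rfl⟩)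
        (fun m n h => by simpa using congrArg Subtype.val h)
    · exact Infinite.of_injective (fun n => ⟨Sum.inl n, rfl⟩)
        (fun m n h => by simpa using congrArg Subtype.val h)
  exact le_antisymm Cardinal.mk_le_aleph0 (Cardinal.aleph0_le_mk _)

-- adjacency conditions
lemma adj_top (S : Set ℕ) (x y : S) : (⊤ : SimpleGraph ℕ).Adj x y ↔ x ≠ y := by
  simp [SimpleGraph.top_adj, Subtype.ext_iff]

lemma adj_two {b : Bool} (x y : {c : ℕ ⊕ ℕ | c.isLeft = b}) :
    twoCliques.Adj x y ↔ x ≠ y := by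
  have hx := x.2; have hy := y.2
  simp only [Set.mem_setOf_eq] at hx hy
  constructor
  · rintro ⟨h, -⟩ rfl; exact h rfl
  · intro h; exact ⟨fun h' => h (Subtype.ext h'), hx.trans hy.symm⟩

lemma adj_singleton {V : Type} (G : SimpleGraph V) (a : V) (x y : ({a} : Set V)) :
    G.Adj x y ↔ x ≠ y := by
  have hx := x.2; have hy := y.2
  simp only [Set.mem_singleton_iff] at hx hy
  have hxy : x = y := Subtype.ext (hx.trans hy.symm)
  subst hxy
  simp only [ne_eq, not_true_eq_false, iff_false]
  rw [hx]
  exact G.loopless.irrefl a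

lemma ball_zero {V : Type} (G : SimpleGraph V) (a : V) : gBall G a 0 = {a} := by
  ext c
  simp only [gBall, Set.mem_setOf_eq, Nat.le_zero, Set.mem_singleton_iff]
  constructor
  · rintro ⟨hr, hd⟩; exact (hr.dist_eq_zero_iff.mp hd).symm
  · rintro rfl; exact ⟨SimpleGraph.Reachable.refl _, by rw [SimpleGraph.dist_self]⟩

lemma nbhd_zero {V W : Type} (G : SimpleGraph V) (H : SimpleGraph W) (a : V) (b : W) :
    gNbhdIso G H 0 a b := by
  unfold gNbhdIso
  rw [ball_zero, ball_zero]
  exact key G H _ _ a b rfl rfl (by simp) (adj_singleton G a) (adj_singleton H b)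

lemma mk_top_ball : Cardinal.mk (Set.univ : Set ℕ) = Cardinal.aleph0 := by
  rw [Cardinal.mk_univ]; exact Cardinal.mk_nat

lemma nbhd_tt (r : ℕ) (a b : ℕ) : gNbhdIso (⊤ : SimpleGraph ℕ) (⊤ : SimpleGraph ℕ) r a b := by
  rcases Nat.eq_zero_or_pos r with rfl | hr
  · exact nbhd_zero _ _ _ _
  · unfold gNbhdIso
    rw [ball_top_pos a r hr, ball_top_pos b r hr]
    exact key _ _ _ _ a b trivial trivial rfl (adj_top _) (adj_top _)

lemma nbhd_th (r : ℕ) (a : ℕ) (b : ℕ ⊕ ℕ) : gNbhdIso (⊤ : SimpleGraph ℕ) twoCliques r a b := by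
  rcases Nat.eq_zero_or_pos r with rfl | hr
  · exact nbhd_zero _ _ _ _
  · unfold gNbhdIso
    rw [ball_top_pos a r hr, ball_two_pos b r hr]
    exact key _ _ _ _ a b trivial rfl (by rw [mk_top_ball, mk_side]) (adj_top _) adj_two

lemma nbhd_ht (r : ℕ) (a : ℕ ⊕ ℕ) (b : ℕ) : gNbhdIso twoCliques (⊤ : SimpleGraph ℕ) r a b := by
  rcases Nat.eq_zero_or_pos r with rfl | hr
  · exact nbhd_zero _ _ _ _
  · unfold gNbhdIso
    rw [ball_two_pos a r hr, ball_top_pos b r hr]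
    exact key _ _ _ _ a b rfl trivial (by rw [mk_top_ball, mk_side]) adj_two (adj_top _)

lemma nbhd_hh (r : ℕ) (a b : ℕ ⊕ ℕ) : gNbhdIso twoCliques twoCliques r a b := by
  rcases Nat.eq_zero_or_pos r with rfl | hr
  · exact nbhd_zero _ _ _ _
  · unfold gNbhdIso
    rw [ball_two_pos a r hr, ball_two_pos b r hr]
    exact key _ _ _ _ a b rfl rfl (by rw [mk_side, mk_side]) adj_two adj_two

/-- A single countable clique and the disjoint union of two countable cliques are Hanf
equivalent, yet distinguished by a first-order sentence in the language of graphs; hence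
elementary boolean queries are not Hanf local on arbitrary structures. -/
theorem clique_twoCliques_hanfEquiv_not_elemEquiv :
    gHanfEquiv (⊤ : SimpleGraph ℕ) twoCliques ∧
      ∃ φ : Language.graph.Sentence,
        (@FirstOrder.Language.Sentence.Realize Language.graph ℕ
            (SimpleGraph.structure (⊤ : SimpleGraph ℕ)) φ) ∧
        ¬ (@FirstOrder.Language.Sentence.Realize Language.graph (ℕ ⊕ ℕ)
            (SimpleGraph.structure twoCliques) φ) := by
  constructor
  · intro r
    constructor
    · intro a
      right
      constructor
      · have h : {a' : ℕ | gNbhdIso (⊤ : SimpleGraph ℕ) (⊤ : SimpleGraph ℕ) r a' a} = Set.univ :=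
          Set.eq_univ_of_forall fun a' => nbhd_tt r a' a
        rw [h]; exact Set.infinite_univ
      · have h : {b : ℕ ⊕ ℕ | gNbhdIso twoCliques (⊤ : SimpleGraph ℕ) r b a} = Set.univ :=
          Set.eq_univ_of_forall fun b => nbhd_ht r b a
        rw [h]; exact Set.infinite_univ
    · intro b
      right
      constructor
      · have h : {a : ℕ | gNbhdIso (⊤ : SimpleGraph ℕ) twoCliques r a b} = Set.univ :=
          Set.eq_univ_of_forall fun a => nbhd_th r a b
        rw [h]; exact Set.infinite_univ
      · have h : {b' : ℕ ⊕ ℕ | gNbhdIso twoCliques twoCliques r b' b} = Set.univ :=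
          Set.eq_univ_of_forall fun b' => nbhd_hh r b' b
        rw [h]; exact Set.infinite_univ
  · refine ⟨∀' ∀' (Language.adj.boundedFormula₂ (&0) (&1) ⊔ Language.Term.bdEqual (&0) (&1)),
      ?_, ?_⟩
    · simp only [Language.Sentence.Realize, Language.Formula.Realize,
        Language.BoundedFormula.realize_all, Language.BoundedFormula.realize_sup,
        Language.BoundedFormula.realize_bdEqual, Language.Relations.boundedFormula₂,
        Language.BoundedFormula.realize_rel, Language.Term.realize_var]
      intro x y
      rcases eq_or_ne x y with rfl | h
      · exact Or.inr rfl
      · exact Or.inl h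
    · simp only [Language.Sentence.Realize, Language.Formula.Realize,
        Language.BoundedFormula.realize_all, Language.BoundedFormula.realize_sup,
        Language.BoundedFormula.realize_bdEqual, Language.Relations.boundedFormula₂,
        Language.BoundedFormula.realize_rel, Language.Term.realize_var]
      intro h
      rcases h (Sum.inl 0) (Sum.inr 0) with h' | h'
      · exact Bool.noConfusion (h'.2)
      · simp [Fin.snoc] at h'
end
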